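/- arXiv:1004.1198 — 3 statements merged into one kernel-verified Lean document; each statement's English description precedes it below -/
import Mathlib

section
/- (Theorem 1, Cross-addition Constraint) Let q be a prime power and define f : GF(q) → Mat(q×q, GF(2)) by f(a)(i,j) = 1 if i − j = a and 0 otherwise, with rows and columns indexed by GF(q). Let W = [w_{i,j}] be a μ × η matrix over GF(q) and let H be the μq × ηq binary block matrix whose (i,j) block is f(w_{i,j}), i.e., H((i,x),(j,y)) = f(w_{i,j})(x,y) for block indices 1 ≤ i ≤ μ, 1 ≤ j ≤ η and x, y ∈ GF(q). Then the Tanner graph of H contains no cycle of length four — equivalently, there do not exist two distinct rows r₁ ≠ r₂ and two distinct columns c₁ ≠ c₂ of H with H(r₁,c₁) = H(r₁,c₂) = H(r₂,c₁) = H(r₂,c₂) = 1 — if and only if w_{i₁,j₁} + w_{i₂,j₂} ≠ w_{i₁,j₂} + w_{i₂,j₁} for all 1 ≤ i₁, i₂ ≤ μ and 1 ≤ j₁, j₂ ≤ η with i₁ ≠ i₂ and j₁ ≠ j₂. -/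
/-!
Each block `f(a)` is a permutation matrix, so two `1`s of a four-cycle sharing a row or a
column cannot lie in the same block: a four-cycle lives on four distinct blocks
`(i₁, j₁), (i₁, j₂), (i₂, j₁), (i₂, j₂)`. Going around it, the differences
`x₁ - y₁, x₁ - y₂, x₂ - y₁, x₂ - y₂` telescope to
`w_{i₁,j₁} - w_{i₁,j₂} + w_{i₂,j₂} - w_{i₂,j₁} = 0`. Conversely, when this relation holds,
starting from row `(i₁, w_{i₁,j₁})` and column `(j₁, 0)` the four incidences can be
closed up.
-/

/-- Given a `μ × η` matrix `W` over a finite field `F` of order `q`, `blockMatrix W` is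
the `μq × ηq` binary matrix obtained by replacing each entry `w_{i,j}` of `W` by the
`q × q` permutation matrix `f(w_{i,j})`, where `f(a)(x,y) = 1` iff `x - y = a`.
Its rows are indexed by `Fin μ × F` and its columns by `Fin η × F`. -/
def blockMatrix {F : Type*} [Field F] [DecidableEq F] {μ η : ℕ} (W : Fin μ → Fin η → F) :
    Matrix (Fin μ × F) (Fin η × F) (ZMod 2) :=
  Matrix.of fun r c => if r.2 - c.2 = W r.1 c.1 then 1 else 0

def Matrix.HasFourCycle {m n R : Type*} [One R] (H : Matrix m n R) : Prop :=
  ∃ (r₁ r₂ : m) (c₁ c₂ : n), r₁ ≠ r₂ ∧ c₁ ≠ c₂ ∧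
    H r₁ c₁ = 1 ∧ H r₁ c₂ = 1 ∧ H r₂ c₁ = 1 ∧ H r₂ c₂ = 1

section BlockMatrix

variable {F : Type*} [Field F] [DecidableEq F] {μ η : ℕ} (W : Fin μ → Fin η → F)

theorem blockMatrix_eq_one_iff (r : Fin μ × F) (c : Fin η × F) :
    blockMatrix W r c = 1 ↔ r.2 - c.2 = W r.1 c.1 := by
  simp [blockMatrix]

variable {W}

theorem blockMatrix_rows_eq_of_eq_one {r₁ r₂ : Fin μ × F} {c : Fin η × F}
    (h₁ : blockMatrix W r₁ c = 1) (h₂ : blockMatrix W r₂ c = 1) (hr : r₁.1 = r₂.1) :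
    r₁ = r₂ := by
  rw [blockMatrix_eq_one_iff] at h₁ h₂
  refine Prod.ext hr ?_
  linear_combination h₁ - h₂ + congrFun (congrArg W hr) c.1

theorem blockMatrix_cols_eq_of_eq_one {r : Fin μ × F} {c₁ c₂ : Fin η × F}
    (h₁ : blockMatrix W r c₁ = 1) (h₂ : blockMatrix W r c₂ = 1) (hc : c₁.1 = c₂.1) :
    c₁ = c₂ := by
  rw [blockMatrix_eq_one_iff] at h₁ h₂
  refine Prod.ext hc ?_
  linear_combination h₂ - h₁ - congrArg (W r.1) hc

theorem cross_add_eq_of_blockMatrix_eq_one {r₁ r₂ : Fin μ × F} {c₁ c₂ : Fin η × F}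
    (h₁₁ : blockMatrix W r₁ c₁ = 1) (h₁₂ : blockMatrix W r₁ c₂ = 1)
    (h₂₁ : blockMatrix W r₂ c₁ = 1) (h₂₂ : blockMatrix W r₂ c₂ = 1) :
    W r₁.1 c₁.1 + W r₂.1 c₂.1 = W r₁.1 c₂.1 + W r₂.1 c₁.1 := by
  rw [blockMatrix_eq_one_iff] at h₁₁ h₁₂ h₂₁ h₂₂
  linear_combination h₁₂ + h₂₁ - h₁₁ - h₂₂

theorem hasFourCycle_blockMatrix_iff :
    (blockMatrix W).HasFourCycle ↔ ∃ (i₁ i₂ : Fin μ) (j₁ j₂ : Fin η), i₁ ≠ i₂ ∧ j₁ ≠ j₂ ∧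
      W i₁ j₁ + W i₂ j₂ = W i₁ j₂ + W i₂ j₁ := by
  constructor
  · rintro ⟨r₁, r₂, c₁, c₂, hr, hc, h₁₁, h₁₂, h₂₁, h₂₂⟩
    exact ⟨r₁.1, r₂.1, c₁.1, c₂.1,
      fun hi => hr (blockMatrix_rows_eq_of_eq_one h₁₁ h₂₁ hi),
      fun hj => hc (blockMatrix_cols_eq_of_eq_one h₁₁ h₁₂ hj),
      cross_add_eq_of_blockMatrix_eq_one h₁₁ h₁₂ h₂₁ h₂₂⟩
  · rintro ⟨i₁, i₂, j₁, j₂, hi, hj, hcross⟩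
    refine ⟨(i₁, W i₁ j₁), (i₂, W i₂ j₁), (j₁, 0), (j₂, W i₁ j₁ - W i₁ j₂),
      by simp [hi], by simp [hj], ?_, ?_, ?_, ?_⟩ <;> rw [blockMatrix_eq_one_iff]
    · ring
    · ring
    · ring
    · linear_combination -hcross

end BlockMatrix

theorem no_four_cycle_iff_cross_addition_general
    {F : Type*} [Field F] [DecidableEq F] {μ η : ℕ}
    (W : Fin μ → Fin η → F) :
    (¬ ∃ (r₁ r₂ : Fin μ × F) (c₁ c₂ : Fin η × F), r₁ ≠ r₂ ∧ c₁ ≠ c₂ ∧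
        blockMatrix W r₁ c₁ = 1 ∧ blockMatrix W r₁ c₂ = 1 ∧
        blockMatrix W r₂ c₁ = 1 ∧ blockMatrix W r₂ c₂ = 1) ↔
    (∀ (i₁ i₂ : Fin μ) (j₁ j₂ : Fin η), i₁ ≠ i₂ → j₁ ≠ j₂ →
        W i₁ j₁ + W i₂ j₂ ≠ W i₁ j₂ + W i₂ j₁) := by
  change ¬ (blockMatrix W).HasFourCycle ↔ _
  rw [hasFourCycle_blockMatrix_iff]
  push Not
  simp only [ne_eq]

/-- Theorem 1 (Cross-addition Constraint): the Tanner graph of the block matrix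
`H = f(W)` contains no cycle of length four (i.e. there are no two distinct rows and two
distinct columns whose four intersection entries all equal `1`) if and only if
`w_{i₁,j₁} + w_{i₂,j₂} ≠ w_{i₁,j₂} + w_{i₂,j₁}` for all `i₁ ≠ i₂` and `j₁ ≠ j₂`. -/
theorem no_four_cycle_iff_cross_addition
    {F : Type*} [Field F] [Fintype F] [DecidableEq F] {μ η : ℕ}
    (W : Fin μ → Fin η → F) :
    (¬ ∃ (r₁ r₂ : Fin μ × F) (c₁ c₂ : Fin η × F), r₁ ≠ r₂ ∧ c₁ ≠ c₂ ∧
        blockMatrix W r₁ c₁ = 1 ∧ blockMatrix W r₁ c₂ = 1 ∧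
        blockMatrix W r₂ c₁ = 1 ∧ blockMatrix W r₂ c₂ = 1) ↔
    (∀ (i₁ i₂ : Fin μ) (j₁ j₂ : Fin η), i₁ ≠ i₂ → j₁ ≠ j₂ →
        W i₁ j₁ + W i₂ j₂ ≠ W i₁ j₂ + W i₂ j₁) :=
  no_four_cycle_iff_cross_addition_general W
end

section
/- Let q be a prime power and let GF(q) be the finite field with q elements. Let H be the q² × q² matrix over GF(2), with rows indexed by pairs (i,x) ∈ GF(q) × GF(q) and columns indexed by pairs (j,y) ∈ GF(q) × GF(q), defined by H((i,x),(j,y)) = 1 if x − y = i·j and H((i,x),(j,y)) = 0 otherwise. Then the Tanner graph of H contains no cycle of length four: there do not exist two distinct rows r₁ ≠ r₂ and two distinct columns c₁ ≠ c₂ of H with H(r₁,c₁) = H(r₁,c₂) = H(r₂,c₁) = H(r₂,c₂) = 1. -/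
/-! Subtracting the four incidence equations `x - y = i * j` gives `(i₁ - i₂) * (j₁ - j₂) = 0`.
In a field one factor vanishes: two rows with the same `i` meeting a common column also have
the same `x`, and dually for columns. -/

/-- The `q² × q²` binary matrix `H`, with rows indexed by pairs `(i,x) ∈ GF(q) × GF(q)`
and columns by pairs `(j,y) ∈ GF(q) × GF(q)`, whose `((i,x),(j,y))` entry is `1` if
`x - y = i·j` and `0` otherwise (the `q × q` array of permutation matrices whose
`(i,j)` block is `f(i·j)`). -/
def fullBlockMatrix (F : Type*) [Field F] [DecidableEq F] :
    Matrix (F × F) (F × F) (ZMod 2) :=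
  Matrix.of fun r c => if r.2 - c.2 = r.1 * c.1 then 1 else 0

section FourIncidences

variable {R : Type*} [CommRing R]

theorem sub_mul_sub_eq_zero_of_four_incidences {i₁ i₂ j₁ j₂ x₁ x₂ y₁ y₂ : R}
    (h₁₁ : x₁ - y₁ = i₁ * j₁) (h₁₂ : x₁ - y₂ = i₁ * j₂)
    (h₂₁ : x₂ - y₁ = i₂ * j₁) (h₂₂ : x₂ - y₂ = i₂ * j₂) :
    (i₁ - i₂) * (j₁ - j₂) = 0 := by
  linear_combination h₁₂ + h₂₁ - h₁₁ - h₂₂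

theorem eq_or_eq_of_four_incidences [NoZeroDivisors R] {r₁ r₂ c₁ c₂ : R × R}
    (h₁₁ : r₁.2 - c₁.2 = r₁.1 * c₁.1) (h₁₂ : r₁.2 - c₂.2 = r₁.1 * c₂.1)
    (h₂₁ : r₂.2 - c₁.2 = r₂.1 * c₁.1) (h₂₂ : r₂.2 - c₂.2 = r₂.1 * c₂.1) :
    r₁ = r₂ ∨ c₁ = c₂ := by
  rcases mul_eq_zero.mp (sub_mul_sub_eq_zero_of_four_incidences h₁₁ h₁₂ h₂₁ h₂₂) with h | h
  · have hi : r₁.1 = r₂.1 := sub_eq_zero.mp h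
    exact .inl (Prod.ext hi (by linear_combination h₁₁ - h₂₁ + c₁.1 * hi))
  · have hj : c₁.1 = c₂.1 := sub_eq_zero.mp h
    exact .inr (Prod.ext hj (by linear_combination h₁₂ - h₁₁ - r₁.1 * hj))

end FourIncidences

theorem fullBlockMatrix_apply_eq_one_iff {F : Type*} [Field F] [DecidableEq F] (r c : F × F) :
    fullBlockMatrix F r c = 1 ↔ r.2 - c.2 = r.1 * c.1 := by
  simp [fullBlockMatrix]

theorem fullBlockMatrix_no_four_cycle_general
    {F : Type*} [Field F] [DecidableEq F] :
    ¬ ∃ (r₁ r₂ : F × F) (c₁ c₂ : F × F), r₁ ≠ r₂ ∧ c₁ ≠ c₂ ∧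
        fullBlockMatrix F r₁ c₁ = 1 ∧ fullBlockMatrix F r₁ c₂ = 1 ∧
        fullBlockMatrix F r₂ c₁ = 1 ∧ fullBlockMatrix F r₂ c₂ = 1 := by
  rintro ⟨r₁, r₂, c₁, c₂, hr, hc, h₁₁, h₁₂, h₂₁, h₂₂⟩
  simp only [fullBlockMatrix_apply_eq_one_iff] at h₁₁ h₁₂ h₂₁ h₂₂
  exact (eq_or_eq_of_four_incidences h₁₁ h₁₂ h₂₁ h₂₂).elim hr hc

/-- The Tanner graph of the matrix `H((i,x),(j,y)) = 1 ↔ x - y = i·j` over `GF(q)`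
contains no cycle of length four: there are no two distinct rows and two distinct
columns whose four intersection entries all equal `1`. -/
theorem fullBlockMatrix_no_four_cycle
    {F : Type*} [Field F] [Fintype F] [DecidableEq F] :
    ¬ ∃ (r₁ r₂ : F × F) (c₁ c₂ : F × F), r₁ ≠ r₂ ∧ c₁ ≠ c₂ ∧
        fullBlockMatrix F r₁ c₁ = 1 ∧ fullBlockMatrix F r₁ c₂ = 1 ∧
        fullBlockMatrix F r₂ c₁ = 1 ∧ fullBlockMatrix F r₂ c₂ = 1 :=
  fullBlockMatrix_no_four_cycle_general
end

section
/- (Cross-multiplication Constraint) Let q be a prime power and let GF(q)* denote the multiplicative group of nonzero elements of GF(q). Define g : GF(q)* → Mat((q−1)×(q−1), GF(2)), with rows and columns indexed by the elements of GF(q)*, by g(a)(i,j) = 1 if i·j⁻¹ = a and g(a)(i,j) = 0 otherwise. Let W = [w_{i,j}] be a μ × η matrix with entries in GF(q)* and let H be the μ(q−1) × η(q−1) binary block matrix whose (i,j) block is g(w_{i,j}). Then the Tanner graph of H contains no cycle of length four — there do not exist two distinct rows r₁ ≠ r₂ and two distinct columns c₁ ≠ c₂ of H with H(r₁,c₁)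 = H(r₁,c₂) = H(r₂,c₁) = H(r₂,c₂) = 1 — if and only if w_{i₁,j₁} · w_{i₂,j₂} ≠ w_{i₁,j₂} · w_{i₂,j₁} for all i₁ ≠ i₂ and j₁ ≠ j₂. -/
/-!
A row `(i, x)` and a column `(j, y)` of `g(W)` meet in a `1` iff `x y⁻¹ = w_{i,j}`. Each block
is a permutation matrix, so a 4-cycle uses two block rows and two block columns, and its four
entries `x_k y_l⁻¹` satisfy `w₁₁ w₂₂ = w₁₂ w₂₁`. Conversely, a solution of `a d = b c` is
realised by `x₁ = a`, `x₂ = c`, `y₁ = 1`, `y₂ = b⁻¹ a`.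
-/

/-- Given a `μ × η` matrix `W` with entries in the multiplicative group `GF(q)*` (the
units of the finite field `F`), `mulBlockMatrix W` is the `μ(q−1) × η(q−1)` binary
matrix obtained by replacing each entry `w_{i,j}` by the `(q−1) × (q−1)` permutation
matrix `g(w_{i,j})`, where `g(a)(x,y) = 1` iff `x·y⁻¹ = a`, rows and columns of each
block being indexed by `GF(q)*`. -/
def mulBlockMatrix {F : Type*} [Field F] [DecidableEq F] {μ η : ℕ}
    (W : Fin μ → Fin η → Fˣ) :
    Matrix (Fin μ × Fˣ) (Fin η × Fˣ) (ZMod 2) :=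
  Matrix.of fun r c => if r.2 * c.2⁻¹ = W r.1 c.1 then 1 else 0

theorem exists_mul_inv_eq_iff_mul_eq_mul {G : Type*} [CommGroup G] (a b c d : G) :
    (∃ x₁ x₂ y₁ y₂ : G, x₁ * y₁⁻¹ = a ∧ x₁ * y₂⁻¹ = b ∧ x₂ * y₁⁻¹ = c ∧ x₂ * y₂⁻¹ = d) ↔
      a * d = b * c := by
  constructor
  · rintro ⟨x₁, x₂, y₁, y₂, rfl, rfl, rfl, rfl⟩
    rw [mul_mul_mul_comm, mul_mul_mul_comm x₁ y₂⁻¹, mul_comm y₁⁻¹]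
  · intro h
    refine ⟨a, c, 1, b⁻¹ * a, by simp, by simp, by simp, ?_⟩
    simp only [mul_inv_rev, inv_inv, ← mul_assoc]
    rw [mul_right_comm, mul_inv_eq_iff_eq_mul, mul_comm c, ← h, mul_comm]

section mulBlockMatrix

variable {F : Type*} [Field F] [DecidableEq F] {μ η : ℕ} (W : Fin μ → Fin η → Fˣ)

theorem mulBlockMatrix_eq_one_iff (r : Fin μ × Fˣ) (c : Fin η × Fˣ) :
    mulBlockMatrix W r c = 1 ↔ r.2 * c.2⁻¹ = W r.1 c.1 := by
  simp only [mulBlockMatrix, Matrix.of_apply]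
  split_ifs with h <;> simp [h]

variable {W}

theorem mulBlockMatrix_eq_one_unique_row {i : Fin μ} {x₁ x₂ : Fˣ} {c : Fin η × Fˣ}
    (h₁ : mulBlockMatrix W (i, x₁) c = 1) (h₂ : mulBlockMatrix W (i, x₂) c = 1) : x₁ = x₂ := by
  rw [mulBlockMatrix_eq_one_iff] at h₁ h₂
  exact mul_right_cancel (h₁.trans h₂.symm)

theorem mulBlockMatrix_eq_one_unique_col {r : Fin μ × Fˣ} {j : Fin η} {y₁ y₂ : Fˣ}
    (h₁ : mulBlockMatrix W r (j, y₁) = 1) (h₂ : mulBlockMatrix W r (j, y₂) = 1) : y₁ = y₂ := by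
  rw [mulBlockMatrix_eq_one_iff] at h₁ h₂
  exact inv_injective (mul_left_cancel (h₁.trans h₂.symm))

variable (W)

theorem hasFourCycle_mulBlockMatrix_iff :
    (mulBlockMatrix W).HasFourCycle ↔ ∃ (i₁ i₂ : Fin μ) (j₁ j₂ : Fin η), i₁ ≠ i₂ ∧ j₁ ≠ j₂ ∧
      W i₁ j₁ * W i₂ j₂ = W i₁ j₂ * W i₂ j₁ := by
  constructor
  · rintro ⟨⟨i₁, x₁⟩, ⟨i₂, x₂⟩, ⟨j₁, y₁⟩, ⟨j₂, y₂⟩, hr, hc, h₁₁, h₁₂, h₂₁, h₂₂⟩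
    have hi : i₁ ≠ i₂ := by
      rintro rfl
      exact hr (by rw [mulBlockMatrix_eq_one_unique_row h₁₁ h₂₁])
    have hj : j₁ ≠ j₂ := by
      rintro rfl
      exact hc (by rw [mulBlockMatrix_eq_one_unique_col h₁₁ h₁₂])
    simp only [mulBlockMatrix_eq_one_iff] at h₁₁ h₁₂ h₂₁ h₂₂
    exact ⟨i₁, i₂, j₁, j₂, hi, hj,
      (exists_mul_inv_eq_iff_mul_eq_mul _ _ _ _).1 ⟨x₁, x₂, y₁, y₂, h₁₁, h₁₂, h₂₁, h₂₂⟩⟩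
  · rintro ⟨i₁, i₂, j₁, j₂, hi, hj, hcross⟩
    obtain ⟨x₁, x₂, y₁, y₂, h₁₁, h₁₂, h₂₁, h₂₂⟩ :=
      (exists_mul_inv_eq_iff_mul_eq_mul _ _ _ _).2 hcross
    refine ⟨(i₁, x₁), (i₂, x₂), (j₁, y₁), (j₂, y₂), by simp [hi], by simp [hj], ?_⟩
    simp only [mulBlockMatrix_eq_one_iff]
    exact ⟨h₁₁, h₁₂, h₂₁, h₂₂⟩

end mulBlockMatrix

theorem no_four_cycle_iff_cross_multiplication_general
    {F : Type*} [Field F] [DecidableEq F] {μ η : ℕ}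
    (W : Fin μ → Fin η → Fˣ) :
    (¬ ∃ (r₁ r₂ : Fin μ × Fˣ) (c₁ c₂ : Fin η × Fˣ), r₁ ≠ r₂ ∧ c₁ ≠ c₂ ∧
        mulBlockMatrix W r₁ c₁ = 1 ∧ mulBlockMatrix W r₁ c₂ = 1 ∧
        mulBlockMatrix W r₂ c₁ = 1 ∧ mulBlockMatrix W r₂ c₂ = 1) ↔
    (∀ (i₁ i₂ : Fin μ) (j₁ j₂ : Fin η), i₁ ≠ i₂ → j₁ ≠ j₂ →
        W i₁ j₁ * W i₂ j₂ ≠ W i₁ j₂ * W i₂ j₁) := by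
  rw [← Matrix.HasFourCycle, hasFourCycle_mulBlockMatrix_iff]
  push Not
  rfl

/-- Cross-multiplication Constraint: the Tanner graph of the block matrix `H = g(W)`
contains no cycle of length four (i.e. there are no two distinct rows and two distinct
columns whose four intersection entries all equal `1`) if and only if
`w_{i₁,j₁} · w_{i₂,j₂} ≠ w_{i₁,j₂} · w_{i₂,j₁}` for all `i₁ ≠ i₂` and `j₁ ≠ j₂`. -/
theorem no_four_cycle_iff_cross_multiplication
    {F : Type*} [Field F] [Fintype F] [DecidableEq F] {μ η : ℕ}
    (W : Fin μ → Fin η → Fˣ) :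
    (¬ ∃ (r₁ r₂ : Fin μ × Fˣ) (c₁ c₂ : Fin η × Fˣ), r₁ ≠ r₂ ∧ c₁ ≠ c₂ ∧
        mulBlockMatrix W r₁ c₁ = 1 ∧ mulBlockMatrix W r₁ c₂ = 1 ∧
        mulBlockMatrix W r₂ c₁ = 1 ∧ mulBlockMatrix W r₂ c₂ = 1) ↔
    (∀ (i₁ i₂ : Fin μ) (j₁ j₂ : Fin η), i₁ ≠ i₂ → j₁ ≠ j₂ →
        W i₁ j₁ * W i₂ j₂ ≠ W i₁ j₂ * W i₂ j₁) :=
  no_four_cycle_iff_cross_multiplication_general W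
end
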